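/- arXiv:1108.2124 — 3 statements merged into one kernel-verified Lean document; each statement's English description precedes it below -/
import Mathlib

section
/- Let P : X → Mat(N,ℂ) be a C¹ family of matrices of principal type at w₀, and let A, B : X → Mat(N,ℂ) be C¹ families with A(w₀) and B(w₀) invertible. Then the family w ↦ A(w) P(w) B(w) is of principal type at w₀. -/
/-- Directional derivative (along `ν`, within `X`) of a matrix-valued family. -/
noncomputable def dirDerivOn {d N : ℕ} (X : Set (Fin d → ℝ))
    (P : (Fin d → ℝ) → Matrix (Fin N) (Fin N) ℂ) (w ν : Fin d → ℝ) :
    Matrix (Fin N) (Fin N) ℂ :=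
  Matrix.of (fderivWithin ℝ (fun x => (fun i j => P x i j : Fin N → Fin N → ℂ)) X w ν)

/-- `P` is of principal type at `w₀`: for some direction `ν`, the map
`u ↦ ∂_ν P(w₀) u mod ran P(w₀)` from `ker P(w₀)` to `ℂ^N / ran P(w₀)` is bijective. -/
def IsPrincipalTypeAt {d N : ℕ} (X : Set (Fin d → ℝ))
    (P : (Fin d → ℝ) → Matrix (Fin N) (Fin N) ℂ) (w₀ : Fin d → ℝ) : Prop :=
  ∃ ν : Fin d → ℝ, Function.Bijective
    ((LinearMap.range (Matrix.mulVecLin (P w₀))).mkQ ∘ₗ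
      Matrix.mulVecLin (dirDerivOn X P w₀ ν) ∘ₗ
        (LinearMap.ker (Matrix.mulVecLin (P w₀))).subtype)

section helpers
variable {d N : ℕ} {X : Set (Fin d → ℝ)} {w : Fin d → ℝ}

lemma entryDiff {F : (Fin d → ℝ) → Matrix (Fin N) (Fin N) ℂ}
    (hX : IsOpen X) (hw : w ∈ X)
    (hF : ContDiffOn ℝ 1 (fun x => (fun i j => F x i j : Fin N → Fin N → ℂ)) X)
    (i j : Fin N) : DifferentiableAt ℝ (fun x => F x i j) w := by
  have h1 : DifferentiableAt ℝ (fun x => (fun i j => F x i j : Fin N → Fin N → ℂ)) w :=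
    (hF.contDiffAt (hX.mem_nhds hw)).differentiableAt one_ne_zero
  exact differentiableAt_pi.mp (differentiableAt_pi.mp h1 i) j

lemma dirDerivOn_entry (hX : IsOpen X)
    {F : (Fin d → ℝ) → Matrix (Fin N) (Fin N) ℂ} (hw : w ∈ X)
    (h : ∀ i j, DifferentiableAt ℝ (fun x => F x i j) w) (ν : Fin d → ℝ) (i j : Fin N) :
    dirDerivOn X F w ν i j = fderiv ℝ (fun x => F x i j) w ν := by
  have h1 : ∀ i, DifferentiableAt ℝ (fun x => (fun j => F x i j)) w :=
    fun i => differentiableAt_pi.mpr (h i)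
  simp only [dirDerivOn, Matrix.of_apply, fderivWithin_of_isOpen hX hw]
  rw [show (fun x => (fun i j => F x i j : Fin N → Fin N → ℂ)) = (fun x i => (fun x j => F x i j) x) from rfl,
    fderiv_pi h1]
  simp only [ContinuousLinearMap.pi_apply]
  rw [show (fun x j => F x i j) = (fun x j => (fun x => F x i j) x) from rfl, fderiv_pi (h i)]
  simp [ContinuousLinearMap.pi_apply]

lemma entryDiff_mul {F G : (Fin d → ℝ) → Matrix (Fin N) (Fin N) ℂ}
    (hF : ∀ i j, DifferentiableAt ℝ (fun x => F x i j) w)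
    (hG : ∀ i j, DifferentiableAt ℝ (fun x => G x i j) w)
    (i j : Fin N) : DifferentiableAt ℝ (fun x => (F x * G x) i j) w := by
  simp only [Matrix.mul_apply]
  exact DifferentiableAt.fun_sum (fun k _ => (hF i k).mul (hG k j))

lemma dirDerivOn_mul (hX : IsOpen X) {F G : (Fin d → ℝ) → Matrix (Fin N) (Fin N) ℂ}
    (hw : w ∈ X)
    (hF : ∀ i j, DifferentiableAt ℝ (fun x => F x i j) w)
    (hG : ∀ i j, DifferentiableAt ℝ (fun x => G x i j) w) (ν : Fin d → ℝ) :
    dirDerivOn X (fun x => F x * G x) w ν =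
      dirDerivOn X F w ν * G w + F w * dirDerivOn X G w ν := by
  ext i j
  rw [Matrix.add_apply, Matrix.mul_apply, Matrix.mul_apply,
    dirDerivOn_entry hX hw (entryDiff_mul hF hG) ν i j]
  have e : (fun x => (F x * G x) i j) = fun x => ∑ k, F x i k * G x k j := by
    funext x; simp [Matrix.mul_apply]
  rw [e, fderiv_fun_sum (fun k _ => (hF i k).fun_mul (hG k j))]
  simp only [ContinuousLinearMap.coe_sum', Finset.sum_apply]
  rw [← Finset.sum_add_distrib]
  refine Finset.sum_congr rfl (fun k _ => ?_)
  rw [fderiv_fun_mul (hF i k) (hG k j)]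
  simp only [ContinuousLinearMap.add_apply, ContinuousLinearMap.smul_apply, smul_eq_mul,
    dirDerivOn_entry hX hw hF ν i k, dirDerivOn_entry hX hw hG ν k j]
  ring

end helpers

/-- If `P` is of principal type at `w₀` and `A`, `B` are `C¹` families
invertible at `w₀`, then `w ↦ A w * P w * B w` is of principal type at `w₀`. -/
theorem stmt_4 {d N : ℕ} (X : Set (Fin d → ℝ)) (hX : IsOpen X)
    (w₀ : Fin d → ℝ) (hw₀ : w₀ ∈ X)
    (P A B : (Fin d → ℝ) → Matrix (Fin N) (Fin N) ℂ)
    (hP : ContDiffOn ℝ 1 (fun x => (fun i j => P x i j : Fin N → Fin N → ℂ)) X)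
    (hA : ContDiffOn ℝ 1 (fun x => (fun i j => A x i j : Fin N → Fin N → ℂ)) X)
    (hB : ContDiffOn ℝ 1 (fun x => (fun i j => B x i j : Fin N → Fin N → ℂ)) X)
    (hAinv : IsUnit (A w₀)) (hBinv : IsUnit (B w₀))
    (h : IsPrincipalTypeAt X P w₀) :
    IsPrincipalTypeAt X (fun w => A w * P w * B w) w₀ := by
  obtain ⟨ν, hf⟩ := h
  refine ⟨ν, ?_⟩
  -- differentiability of entries
  have hAd : ∀ i j, DifferentiableAt ℝ (fun x => A x i j) w₀ := entryDiff hX hw₀ hA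
  have hPd : ∀ i j, DifferentiableAt ℝ (fun x => P x i j) w₀ := entryDiff hX hw₀ hP
  have hBd : ∀ i j, DifferentiableAt ℝ (fun x => B x i j) w₀ := entryDiff hX hw₀ hB
  have hAPd : ∀ i j, DifferentiableAt ℝ (fun x => (A x * P x) i j) w₀ := entryDiff_mul hAd hPd
  -- product rule
  have hD : dirDerivOn X (fun w => A w * P w * B w) w₀ ν =
      dirDerivOn X A w₀ ν * P w₀ * B w₀ + A w₀ * dirDerivOn X P w₀ ν * B w₀
        + A w₀ * P w₀ * dirDerivOn X B w₀ ν := by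
    have h1 := dirDerivOn_mul (F := fun x => A x * P x) (G := B) hX hw₀ hAPd hBd ν
    have h2 := dirDerivOn_mul (F := A) (G := P) hX hw₀ hAd hPd ν
    rw [show (fun w => A w * P w * B w) = (fun x => (fun x => A x * P x) x * B x) from rfl, h1, h2,
      add_mul]
  -- inverses
  set Ai : Matrix (Fin N) (Fin N) ℂ := ↑hAinv.unit⁻¹ with hAidef
  set Bi : Matrix (Fin N) (Fin N) ℂ := ↑hBinv.unit⁻¹ with hBidef
  have hA1 : A w₀ * Ai = 1 := hAinv.mul_val_inv
  have hA2 : Ai * A w₀ = 1 := hAinv.val_inv_mul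
  have hB1 : B w₀ * Bi = 1 := hBinv.mul_val_inv
  have hB2 : Bi * B w₀ = 1 := hBinv.val_inv_mul
  have cancelA : ∀ x : Fin N → ℂ, Ai.mulVec ((A w₀).mulVec x) = x := fun x => by
    rw [Matrix.mulVec_mulVec, hA2, Matrix.one_mulVec]
  have cancelA' : ∀ x : Fin N → ℂ, (A w₀).mulVec (Ai.mulVec x) = x := fun x => by
    rw [Matrix.mulVec_mulVec, hA1, Matrix.one_mulVec]
  have cancelB : ∀ x : Fin N → ℂ, Bi.mulVec ((B w₀).mulVec x) = x := fun x => by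
    rw [Matrix.mulVec_mulVec, hB2, Matrix.one_mulVec]
  have cancelB' : ∀ x : Fin N → ℂ, (B w₀).mulVec (Bi.mulVec x) = x := fun x => by
    rw [Matrix.mulVec_mulVec, hB1, Matrix.one_mulVec]
  have hQvec : ∀ u : Fin N → ℂ,
      (A w₀ * P w₀ * B w₀).mulVec u = (A w₀).mulVec ((P w₀).mulVec ((B w₀).mulVec u)) :=
    fun u => by rw [Matrix.mulVec_mulVec, Matrix.mulVec_mulVec]
  -- submodules and maps
  set KQ := LinearMap.ker (Matrix.mulVecLin (A w₀ * P w₀ * B w₀)) with hKQ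
  set KP := LinearMap.ker (Matrix.mulVecLin (P w₀)) with hKP
  set RQ := LinearMap.range (Matrix.mulVecLin (A w₀ * P w₀ * B w₀)) with hRQ
  set RP := LinearMap.range (Matrix.mulVecLin (P w₀)) with hRP
  have memKQ : ∀ u : Fin N → ℂ, u ∈ KQ ↔ (A w₀ * P w₀ * B w₀).mulVec u = 0 := fun u => by
    rw [hKQ, LinearMap.mem_ker, Matrix.mulVecLin_apply]
  have memKP : ∀ u : Fin N → ℂ, u ∈ KP ↔ (P w₀).mulVec u = 0 := fun u => by
    rw [hKP, LinearMap.mem_ker, Matrix.mulVecLin_apply]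
  have memRQ : ∀ x : Fin N → ℂ, x ∈ RQ ↔ ∃ y, (A w₀ * P w₀ * B w₀).mulVec y = x := fun x => by
    simp only [hRQ, LinearMap.mem_range, Matrix.mulVecLin_apply]
  have memRP : ∀ x : Fin N → ℂ, x ∈ RP ↔ ∃ y, (P w₀).mulVec y = x := fun x => by
    simp only [hRP, LinearMap.mem_range, Matrix.mulVecLin_apply]
  -- ker Q → ker P, u ↦ B₀ u
  have hker : ∀ u : Fin N → ℂ, u ∈ KQ → (P w₀).mulVec ((B w₀).mulVec u) = 0 := by
    intro u hu
    have h0 : (A w₀ * P w₀ * B w₀).mulVec u = 0 := (memKQ u).mp hu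
    rw [hQvec] at h0
    have := congrArg Ai.mulVec h0
    rwa [cancelA, Matrix.mulVec_zero] at this
  set φ : KQ → KP := fun u => ⟨(B w₀).mulVec ↑u, (memKP _).mpr (hker ↑u u.2)⟩ with hφdef
  have hφ : Function.Bijective φ := by
    constructor
    · intro u v huv
      have h1 : (B w₀).mulVec ↑u = (B w₀).mulVec ↑v := congrArg Subtype.val huv
      have := congrArg Bi.mulVec h1
      rw [cancelB, cancelB] at this
      exact Subtype.ext this
    · intro v
      have hv0 : (P w₀).mulVec ↑v = 0 := (memKP _).mp v.2
      have hm : (Bi.mulVec ↑v) ∈ KQ := by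
        rw [memKQ, hQvec, cancelB', hv0, Matrix.mulVec_zero]
      refine ⟨⟨Bi.mulVec ↑v, hm⟩, ?_⟩
      apply Subtype.ext
      simp only [hφdef]
      exact cancelB' ↑v
  -- quotient map induced by A₀
  have hle : RP ≤ RQ.comap (Matrix.mulVecLin (A w₀)) := by
    intro x hx
    obtain ⟨y, hy⟩ := (memRP x).mp hx
    rw [Submodule.mem_comap, Matrix.mulVecLin_apply]
    rw [memRQ]
    exact ⟨Bi.mulVec y, by rw [hQvec, cancelB', hy]⟩
  set ψ := RP.mapQ RQ (Matrix.mulVecLin (A w₀)) hle with hψdef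
  have hψapp : ∀ x : Fin N → ℂ, ψ (RP.mkQ x) = RQ.mkQ ((A w₀).mulVec x) := fun x => by
    rw [hψdef, Submodule.mkQ_apply, Submodule.mapQ_apply, Matrix.mulVecLin_apply,
      Submodule.mkQ_apply]
  have hψ : Function.Bijective ψ := by
    constructor
    · rw [injective_iff_map_eq_zero]
      intro z hz
      obtain ⟨x, rfl⟩ := RP.mkQ_surjective z
      rw [hψapp, Submodule.mkQ_apply, Submodule.Quotient.mk_eq_zero] at hz
      obtain ⟨y, hy⟩ := (memRQ _).mp hz
      rw [hQvec] at hy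
      have := congrArg Ai.mulVec hy
      rw [cancelA, cancelA] at this
      rw [Submodule.mkQ_apply, Submodule.Quotient.mk_eq_zero]
      exact (memRP x).mpr ⟨(B w₀).mulVec y, this⟩
    · intro z
      obtain ⟨x, rfl⟩ := RQ.mkQ_surjective z
      exact ⟨RP.mkQ (Ai.mulVec x), by rw [hψapp, cancelA']⟩
  -- the principal-type map for P
  set f := RP.mkQ ∘ₗ Matrix.mulVecLin (dirDerivOn X P w₀ ν) ∘ₗ KP.subtype with hfdef
  -- identify the goal map with ψ ∘ f ∘ φ
  show Function.Bijective
    (RQ.mkQ ∘ₗ Matrix.mulVecLin (dirDerivOn X (fun w => A w * P w * B w) w₀ ν) ∘ₗ KQ.subtype)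
  have key : ∀ u : KQ,
      (RQ.mkQ ∘ₗ Matrix.mulVecLin (dirDerivOn X (fun w => A w * P w * B w) w₀ ν) ∘ₗ KQ.subtype) u
        = ψ (f (φ u)) := by
    intro u
    simp only [LinearMap.coe_comp, Function.comp_apply, Submodule.coe_subtype,
      Matrix.mulVecLin_apply, hD]
    rw [Matrix.add_mulVec, Matrix.add_mulVec]
    have t1 : (dirDerivOn X A w₀ ν * P w₀ * B w₀).mulVec ↑u = 0 := by
      rw [← Matrix.mulVec_mulVec, ← Matrix.mulVec_mulVec, hker ↑u u.2, Matrix.mulVec_zero]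
    have t3 : (A w₀ * P w₀ * dirDerivOn X B w₀ ν).mulVec ↑u ∈ RQ := by
      rw [memRQ]
      refine ⟨Bi.mulVec ((dirDerivOn X B w₀ ν).mulVec ↑u), ?_⟩
      rw [hQvec, cancelB', ← Matrix.mulVec_mulVec, ← Matrix.mulVec_mulVec]
    rw [t1, zero_add, map_add]
    rw [show RQ.mkQ ((A w₀ * P w₀ * dirDerivOn X B w₀ ν).mulVec ↑u) = 0 by
      rw [Submodule.mkQ_apply, Submodule.Quotient.mk_eq_zero]; exact t3, add_zero]
    have t2 : (A w₀ * dirDerivOn X P w₀ ν * B w₀).mulVec ↑u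
        = (A w₀).mulVec ((dirDerivOn X P w₀ ν).mulVec ((B w₀).mulVec ↑u)) := by
      rw [Matrix.mulVec_mulVec, Matrix.mulVec_mulVec]
    rw [t2, ← hψapp]
    rfl
  have hcoe : ⇑(RQ.mkQ ∘ₗ Matrix.mulVecLin (dirDerivOn X (fun w => A w * P w * B w) w₀ ν)
      ∘ₗ KQ.subtype) = ⇑ψ ∘ ⇑f ∘ φ := funext key
  rw [hcoe]
  exact hψ.comp (hf.comp hφ)
end

section
/- Let X ⊆ ℝⁿ be open, let λ, e ∈ C^∞(X) be scalar smooth functions, let γ ∈ X with λ(γ) = 0 and dλ(γ) ≠ 0. If λ^m · e vanishes of infinite order at γ for some m ≥ 1 (all partial derivatives of λ^m e vanish at γ), then e vanishes of infinite order at γ (all partial derivatives of e vanish at γ). -/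
open Fin Function Set ContinuousLinearMap

noncomputable section

variable {E : Type} [NormedAddCommGroup E] [NormedSpace ℝ E]

/-- Remove the `j`-th entry of a tuple (non-dependent version). -/
def rmv {a : ℕ} (j : Fin (a + 1)) (v : Fin (a + 1) → E) : Fin a → E :=
  fun i => v (j.succAbove i)

/-- Insert `u` at the front after removing the `j`-th entry. -/
def frontInsert {a : ℕ} (u : E) : ∀ (_ : Fin a) (_ : Fin a → E), Fin a → E :=
  match a with
  | 0 => fun j _ => j.elim0
  | _ + 1 => fun j v => Fin.cons u (rmv j v)

lemma rmv_zero {a : ℕ} (v : Fin (a + 1) → E) : rmv 0 v = Fin.tail v := by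
  funext i; simp [rmv, Fin.tail]

lemma rmv_last {a : ℕ} (v : Fin (a + 1) → E) : rmv (Fin.last a) v = Fin.init v := by
  funext i
  simp [rmv, Fin.init, Fin.succAbove_last]

lemma rmv_succ_cons {a : ℕ} (u : E) (j : Fin a) (v : Fin a → E) :
    rmv j.succ (Fin.cons u v) = frontInsert u j v := by
  match a, j with
  | a + 1, j =>
    show rmv j.succ (Fin.cons u v) = Fin.cons u (rmv j v)
    funext i
    refine Fin.cases ?_ (fun i' => ?_) i
    · show (Fin.cons u v : Fin (a+2) → E) (j.succ.succAbove 0) = u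
      rw [Fin.succ_succAbove_zero]
      rfl
    · show (Fin.cons u v : Fin (a+2) → E) (j.succ.succAbove i'.succ) = (rmv j v) i'
      rw [Fin.succ_succAbove_succ]
      rfl


lemma frontInsert_eq {a : ℕ} (u : E) (j : Fin (a + 1)) (v : Fin (a + 1) → E) :
    frontInsert u j v = Fin.cons u (rmv j v) := rfl

lemma polyAux : ∀ (a : ℕ) (c : ℕ), 0 < c →
    ∀ (T : ContinuousMultilinearMap ℝ (fun _ : Fin a => E) ℂ) (φ : E →L[ℝ] ℂ) (u : E),
    φ u ≠ 0 →
    (∀ v : Fin a → E,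
      (c : ℂ) * (φ u * T v) + ∑ j : Fin a, φ (v j) * T (frontInsert u j v) = 0) →
    T = 0 := by
  intro a
  induction a with
  | zero =>
    intro c hc T φ u hu H
    ext v
    have := H v
    simp only [Finset.univ_eq_empty, Finset.sum_empty, add_zero, mul_eq_zero] at this
    rcases this with h | h
    · exact absurd (by exact_mod_cast h) hc.ne'
    rcases h with h | h
    · exact absurd h hu
    · simpa using h
  | succ b IH =>
    intro c hc T φ u hu H
    set S : ContinuousMultilinearMap ℝ (fun _ : Fin b => E) ℂ := T.curryLeft u with hS
    have hSv : ∀ v : Fin b → E, S v = T (Fin.cons u v) := by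
      intro v
      simp [hS]
    have hS0 : S = 0 := by
      refine IH (c+1) (Nat.succ_pos _) S φ u hu ?_
      intro v
      have h1 := H (Fin.cons u v)
      rw [Fin.sum_univ_succ] at h1
      simp only [Fin.cons_zero, Fin.cons_succ] at h1
      have e0 : frontInsert u (0 : Fin (b+1)) (Fin.cons u v) = Fin.cons u v := by
        rw [frontInsert_eq, rmv_zero, Fin.tail_cons]
      have eS : ∀ j : Fin b, frontInsert u j.succ (Fin.cons u v)
          = Fin.cons u (frontInsert u j v) := by
        intro j
        rw [frontInsert_eq, rmv_succ_cons]
      rw [e0] at h1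
      have h2 : (c : ℂ) * (φ u * T (Fin.cons u v)) + (φ u * T (Fin.cons u v)
          + ∑ j : Fin b, φ (v j) * T (Fin.cons u (frontInsert u j v))) = 0 := by
        rw [← h1]
        congr 2
        refine Finset.sum_congr rfl fun j _ => ?_
        rw [eS j]
      have h3 : ((c : ℕ) + 1 : ℂ) * (φ u * S v) + ∑ j : Fin b, φ (v j) * S (frontInsert u j v) = 0 := by
        simp only [hSv]
        rw [← h2]
        ring
      rw [← h3]
      norm_num
    -- now conclude T = 0
    ext v
    have h1 := H v
    have hz : ∀ j : Fin (b+1), T (frontInsert u j v) = 0 := by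
      intro j
      have heq : frontInsert u j v = Fin.cons u (rmv j v) := rfl
      rw [heq, ← hSv, hS0]
      simp
    simp only [hz, mul_zero, Finset.sum_const_zero, add_zero, mul_eq_zero] at h1
    rcases h1 with h | h
    · exact absurd (by exact_mod_cast h) hc.ne'
    rcases h with h | h
    · exact absurd h hu
    · simpa using h

variable {X : Set E} {γ : E}

lemma flat_zero_of {F : Type} [NormedAddCommGroup F] [NormedSpace ℝ F] {g : E → F}
    (h : iteratedFDerivWithin ℝ 0 g X γ = 0) : g γ = 0 := by
  have h0 := congrFun (congrArg DFunLike.coe h) (fun _ : Fin 0 => (0 : E))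
  simpa [iteratedFDerivWithin_zero_apply] using h0

lemma flat_shift {F : Type} [NormedAddCommGroup F] [NormedSpace ℝ F]
    (hX : IsOpen X) (hγ : γ ∈ X) {h : E → F} {j : ℕ}
    (hz : iteratedFDerivWithin ℝ (j + 1) h X γ = 0) :
    iteratedFDerivWithin ℝ j (fderivWithin ℝ h X) X γ = 0 := by
  ext ws z
  have h1 := iteratedFDerivWithin_succ_apply_right (𝕜 := ℝ) (f := h)
    hX.uniqueDiffOn hγ (Fin.snoc ws z)
  rw [hz] at h1
  simp only [ContinuousMultilinearMap.zero_apply, Fin.init_snoc, Fin.snoc_last] at h1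
  simpa using h1.symm

section Bilin

variable {F₁ F₂ F₃ : Type}
  [NormedAddCommGroup F₁] [NormedSpace ℝ F₁]
  [NormedAddCommGroup F₂] [NormedSpace ℝ F₂]
  [NormedAddCommGroup F₃] [NormedSpace ℝ F₃]

lemma bilinSmooth (B : F₁ →L[ℝ] F₂ →L[ℝ] F₃) {f : E → F₁} {g : E → F₂}
    (hf : ContDiffOn ℝ (⊤ : ℕ∞) f X) (hg : ContDiffOn ℝ (⊤ : ℕ∞) g X) :
    ContDiffOn ℝ (⊤ : ℕ∞) (fun x => B (f x) (g x)) X :=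
  B.isBoundedBilinearMap.contDiff.comp_contDiffOn (hf.prodMk hg)

lemma fderiv_bilin (hX : IsOpen X) (B : F₁ →L[ℝ] F₂ →L[ℝ] F₃) {f : E → F₁} {g : E → F₂}
    (hf : ContDiffOn ℝ (⊤ : ℕ∞) f X) (hg : ContDiffOn ℝ (⊤ : ℕ∞) g X) {x : E} (hx : x ∈ X) :
    fderivWithin ℝ (fun y => B (f y) (g y)) X x =
      ((compL ℝ E F₂ F₃).comp B) (f x) (fderivWithin ℝ g X x)
        + ((compL ℝ E F₁ F₃).comp B.flip) (g x) (fderivWithin ℝ f X x) := by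
  have hfd : DifferentiableWithinAt ℝ f X x := (hf.differentiableOn (by simp)) x hx
  have hgd : DifferentiableWithinAt ℝ g X x := (hg.differentiableOn (by simp)) x hx
  have hB := (B.isBoundedBilinearMap.hasFDerivAt (f x, g x)).comp_hasFDerivWithinAt x
    (hfd.hasFDerivWithinAt.prodMk hgd.hasFDerivWithinAt)
  have hcomp : (fun y => B (f y) (g y))
      = ((fun p : F₁ × F₂ => B p.1 p.2) ∘ fun x => (f x, g x)) := rfl
  rw [hcomp, hB.fderivWithin (hX.uniqueDiffOn x hx)]
  ext w
  simp [IsBoundedBilinearMap.deriv_apply, ContinuousLinearMap.compL_apply]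

end Bilin

theorem below_right (hX : IsOpen X) (hγ : γ ∈ X) : ∀ (q : ℕ),
    ∀ {F₁ F₂ F₃ : Type} [NormedAddCommGroup F₁] [NormedSpace ℝ F₁]
      [NormedAddCommGroup F₂] [NormedSpace ℝ F₂] [NormedAddCommGroup F₃] [NormedSpace ℝ F₃]
      (B : F₁ →L[ℝ] F₂ →L[ℝ] F₃) (f : E → F₁) (g : E → F₂),
      ContDiffOn ℝ (⊤ : ℕ∞) f X → ContDiffOn ℝ (⊤ : ℕ∞) g X →
      (∀ j, j < q → iteratedFDerivWithin ℝ j g X γ = 0) →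
      ∀ j, j < q → iteratedFDerivWithin ℝ j (fun x => B (f x) (g x)) X γ = 0 := by
  intro q
  induction q with
  | zero =>
    intro F₁ F₂ F₃ _ _ _ _ _ _ B f g hf hg hflat j hj
    exact absurd hj (Nat.not_lt_zero j)
  | succ q IH =>
    intro F₁ F₂ F₃ _ _ _ _ _ _ B f g hf hg hflat j hj
    cases j with
    | zero =>
      have hg0 : g γ = 0 := flat_zero_of (hflat 0 hj)
      ext m
      rw [iteratedFDerivWithin_zero_apply]
      simp [hg0]
    | succ i =>
      have hi : i < q := Nat.lt_of_succ_lt_succ hj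
      have hf' := hf.fderivWithin (m := (⊤ : ℕ∞)) hX.uniqueDiffOn (by simp)
      have hg' := hg.fderivWithin (m := (⊤ : ℕ∞)) hX.uniqueDiffOn (by simp)
      have hEq : Set.EqOn (fun y => fderivWithin ℝ (fun x => B (f x) (g x)) X y)
          (fun x => ((compL ℝ E F₂ F₃).comp B) (f x) (fderivWithin ℝ g X x)
            + ((compL ℝ E F₁ F₃).comp B.flip) (g x) (fderivWithin ℝ f X x)) X :=
        fun x hx => fderiv_bilin hX B hf hg hx
      have t1 : iteratedFDerivWithin ℝ i
          (fun x => ((compL ℝ E F₂ F₃).comp B) (f x) (fderivWithin ℝ g X x)) X γ = 0 :=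
        IH _ f (fderivWithin ℝ g X) hf hg'
          (fun j hj => flat_shift hX hγ (hflat (j+1) (Nat.succ_lt_succ hj))) i hi
      have t2 : iteratedFDerivWithin ℝ i
          (fun x => ((compL ℝ E F₁ F₃).comp B.flip) (g x) (fderivWithin ℝ f X x)) X γ = 0 := by
        have hfun : (fun x => ((compL ℝ E F₁ F₃).comp B.flip) (g x) (fderivWithin ℝ f X x))
            = (fun x => ((compL ℝ E F₁ F₃).comp B.flip).flip (fderivWithin ℝ f X x) (g x)) := by
          funext x; rw [ContinuousLinearMap.flip_apply]
        rw [hfun]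
        exact IH _ (fderivWithin ℝ f X) g hf' hg
          (fun j hj => hflat j (hj.trans (Nat.lt_succ_self q))) i hi
      have hkey : iteratedFDerivWithin ℝ i
          (fun y => fderivWithin ℝ (fun x => B (f x) (g x)) X y) X γ = 0 := by
        rw [iteratedFDerivWithin_congr hEq hγ,
          iteratedFDerivWithin_add_apply' (((bilinSmooth _ hf hg').of_le (by exact_mod_cast le_top)) γ hγ) (((bilinSmooth _ hg hf').of_le (by exact_mod_cast le_top)) γ hγ)
            hX.uniqueDiffOn hγ, t1, t2, add_zero]
      ext m
      rw [iteratedFDerivWithin_succ_apply_right hX.uniqueDiffOn hγ m, hkey]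
      simp

lemma hsucc_right {F : Type} [NormedAddCommGroup F] [NormedSpace ℝ F]
    (hX : IsOpen X) (hγ : γ ∈ X) {g : E → F} {q : ℕ} (ws : Fin q → E) (z : E) :
    (iteratedFDerivWithin ℝ q (fderivWithin ℝ g X) X γ ws) z
      = iteratedFDerivWithin ℝ (q + 1) g X γ (Fin.snoc ws z) := by
  rw [iteratedFDerivWithin_succ_apply_right hX.uniqueDiffOn hγ]
  simp only [Fin.init_snoc, Fin.snoc_last]

theorem thresh_right (hX : IsOpen X) (hγ : γ ∈ X) : ∀ (q : ℕ),
    ∀ {F₁ F₂ F₃ : Type} [NormedAddCommGroup F₁] [NormedSpace ℝ F₁]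
      [NormedAddCommGroup F₂] [NormedSpace ℝ F₂] [NormedAddCommGroup F₃] [NormedSpace ℝ F₃]
      (B : F₁ →L[ℝ] F₂ →L[ℝ] F₃) (f : E → F₁) (g : E → F₂),
      ContDiffOn ℝ (⊤ : ℕ∞) f X → ContDiffOn ℝ (⊤ : ℕ∞) g X →
      (∀ j, j < q → iteratedFDerivWithin ℝ j g X γ = 0) →
      iteratedFDerivWithin ℝ q (fun x => B (f x) (g x)) X γ
        = (B (f γ)).compContinuousMultilinearMap (iteratedFDerivWithin ℝ q g X γ) := by
  intro q
  induction q with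
  | zero =>
    intro F₁ F₂ F₃ _ _ _ _ _ _ B f g hf hg hflat
    ext m
    simp [iteratedFDerivWithin_zero_apply]
  | succ q IH =>
    intro F₁ F₂ F₃ _ _ _ _ _ _ B f g hf hg hflat
    have hf' := hf.fderivWithin (m := (⊤ : ℕ∞)) hX.uniqueDiffOn (by simp)
    have hg' := hg.fderivWithin (m := (⊤ : ℕ∞)) hX.uniqueDiffOn (by simp)
    have hEq : Set.EqOn (fun y => fderivWithin ℝ (fun x => B (f x) (g x)) X y)
        (fun x => ((compL ℝ E F₂ F₃).comp B) (f x) (fderivWithin ℝ g X x)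
          + ((compL ℝ E F₁ F₃).comp B.flip) (g x) (fderivWithin ℝ f X x)) X :=
      fun x hx => fderiv_bilin hX B hf hg hx
    have t2 : iteratedFDerivWithin ℝ q
        (fun x => ((compL ℝ E F₁ F₃).comp B.flip) (g x) (fderivWithin ℝ f X x)) X γ = 0 := by
      have hfun : (fun x => ((compL ℝ E F₁ F₃).comp B.flip) (g x) (fderivWithin ℝ f X x))
          = (fun x => ((compL ℝ E F₁ F₃).comp B.flip).flip (fderivWithin ℝ f X x) (g x)) := by
        funext x; rw [ContinuousLinearMap.flip_apply]
      rw [hfun]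
      exact below_right hX hγ (q+1) _ (fderivWithin ℝ f X) g hf' hg hflat q (Nat.lt_succ_self q)
    have t1 : iteratedFDerivWithin ℝ q
        (fun x => ((compL ℝ E F₂ F₃).comp B) (f x) (fderivWithin ℝ g X x)) X γ
        = ((((compL ℝ E F₂ F₃).comp B) (f γ)).compContinuousMultilinearMap
            (iteratedFDerivWithin ℝ q (fderivWithin ℝ g X) X γ)) :=
      IH _ f (fderivWithin ℝ g X) hf hg'
        (fun j hj => flat_shift hX hγ (hflat (j+1) (Nat.succ_lt_succ hj)))
    ext m
    rw [iteratedFDerivWithin_succ_apply_right hX.uniqueDiffOn hγ m,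
      iteratedFDerivWithin_congr hEq hγ,
      iteratedFDerivWithin_add_apply' (((bilinSmooth _ hf hg').of_le (by exact_mod_cast le_top)) γ hγ)
        (((bilinSmooth _ hg hf').of_le (by exact_mod_cast le_top)) γ hγ) hX.uniqueDiffOn hγ, t1, t2]
    simp only [ContinuousMultilinearMap.add_apply, ContinuousMultilinearMap.zero_apply,
      add_zero, ContinuousLinearMap.add_apply, ContinuousLinearMap.zero_apply,
      ContinuousLinearMap.compContinuousMultilinearMap_coe, Function.comp_apply,
      ContinuousLinearMap.coe_comp', ContinuousLinearMap.compL_apply]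
    rw [hsucc_right hX hγ]
    simp [Fin.snoc_init_self]

omit [NormedAddCommGroup E] [NormedSpace ℝ E] in
lemma snoc_rmv {q : ℕ} (m : Fin (q + 2) → E) (i : Fin (q + 1)) :
    (Fin.snoc (rmv i (Fin.init m)) (m (Fin.last (q + 1))) : Fin (q + 1) → E)
      = rmv i.castSucc m := by
  funext j
  refine Fin.lastCases ?_ (fun j' => ?_) j
  · rw [Fin.snoc_last]
    show _ = m (i.castSucc.succAbove (Fin.last q))
    rw [Fin.succAbove_of_le_castSucc _ _ (by
      simpa using Fin.castSucc_le_castSucc_iff.mpr (Fin.le_last i)), Fin.succ_last]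
  · rw [Fin.snoc_castSucc]
    show Fin.init m (i.succAbove j') = m (i.castSucc.succAbove j'.castSucc)
    rw [Fin.castSucc_succAbove_castSucc]
    rfl

theorem leading_term (hX : IsOpen X) (hγ : γ ∈ X) : ∀ (q : ℕ),
    ∀ {F₁ F₂ F₃ : Type} [NormedAddCommGroup F₁] [NormedSpace ℝ F₁]
      [NormedAddCommGroup F₂] [NormedSpace ℝ F₂] [NormedAddCommGroup F₃] [NormedSpace ℝ F₃]
      (B : F₁ →L[ℝ] F₂ →L[ℝ] F₃) (f : E → F₁) (g : E → F₂),
      ContDiffOn ℝ (⊤ : ℕ∞) f X → ContDiffOn ℝ (⊤ : ℕ∞) g X → f γ = 0 →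
      (∀ j, j < q → iteratedFDerivWithin ℝ j g X γ = 0) →
      ∀ m : Fin (q + 1) → E,
      iteratedFDerivWithin ℝ (q + 1) (fun x => B (f x) (g x)) X γ m
        = ∑ i : Fin (q + 1), B (fderivWithin ℝ f X γ (m i))
            (iteratedFDerivWithin ℝ q g X γ (rmv i m)) := by
  intro q
  induction q with
  | zero =>
    intro F₁ F₂ F₃ _ _ _ _ _ _ B f g hf hg hf0 hflat m
    rw [iteratedFDerivWithin_one_apply (hX.uniqueDiffOn γ hγ),
      fderiv_bilin hX B hf hg hγ]
    simp [hf0, iteratedFDerivWithin_zero_apply, ContinuousLinearMap.compL_apply]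
  | succ q IH =>
    intro F₁ F₂ F₃ _ _ _ _ _ _ B f g hf hg hf0 hflat m
    have hf' := hf.fderivWithin (m := (⊤ : ℕ∞)) hX.uniqueDiffOn (by simp)
    have hg' := hg.fderivWithin (m := (⊤ : ℕ∞)) hX.uniqueDiffOn (by simp)
    have hEq : Set.EqOn (fun y => fderivWithin ℝ (fun x => B (f x) (g x)) X y)
        (fun x => ((compL ℝ E F₂ F₃).comp B) (f x) (fderivWithin ℝ g X x)
          + ((compL ℝ E F₁ F₃).comp B.flip) (g x) (fderivWithin ℝ f X x)) X :=
      fun x hx => fderiv_bilin hX B hf hg hx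
    -- second term: threshold
    have t2 : iteratedFDerivWithin ℝ (q + 1)
        (fun x => ((compL ℝ E F₁ F₃).comp B.flip) (g x) (fderivWithin ℝ f X x)) X γ
        = ((((compL ℝ E F₁ F₃).comp B.flip).flip (fderivWithin ℝ f X γ)).compContinuousMultilinearMap
            (iteratedFDerivWithin ℝ (q + 1) g X γ)) := by
      have hfun : (fun x => ((compL ℝ E F₁ F₃).comp B.flip) (g x) (fderivWithin ℝ f X x))
          = (fun x => ((compL ℝ E F₁ F₃).comp B.flip).flip (fderivWithin ℝ f X x) (g x)) := by
        funext x; rw [ContinuousLinearMap.flip_apply]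
      rw [hfun]
      exact thresh_right hX hγ (q+1) _ (fderivWithin ℝ f X) g hf' hg hflat
    -- first term: induction hypothesis
    have t1 := IH ((compL ℝ E F₂ F₃).comp B) f (fderivWithin ℝ g X) hf hg' hf0
      (fun j hj => flat_shift hX hγ (hflat (j+1) (Nat.succ_lt_succ hj))) (Fin.init m)
    rw [iteratedFDerivWithin_succ_apply_right hX.uniqueDiffOn hγ m,
      iteratedFDerivWithin_congr hEq hγ,
      iteratedFDerivWithin_add_apply' (((bilinSmooth _ hf hg').of_le (by exact_mod_cast le_top)) γ hγ)
        (((bilinSmooth _ hg hf').of_le (by exact_mod_cast le_top)) γ hγ) hX.uniqueDiffOn hγ]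
    simp only [ContinuousMultilinearMap.add_apply, ContinuousLinearMap.add_apply]
    rw [t1, t2]
    simp only [ContinuousLinearMap.sum_apply,
      ContinuousLinearMap.compContinuousMultilinearMap_coe, Function.comp_apply,
      ContinuousLinearMap.coe_comp', ContinuousLinearMap.compL_apply,
      ContinuousLinearMap.flip_apply]
    -- rewrite each summand of the first part
    have hterm : ∀ i : Fin (q + 1),
        (B (fderivWithin ℝ f X γ (Fin.init m i)))
            ((iteratedFDerivWithin ℝ q (fderivWithin ℝ g X) X γ (rmv i (Fin.init m)))
              (m (Fin.last (q + 1))))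
        = B (fderivWithin ℝ f X γ (m i.castSucc))
            (iteratedFDerivWithin ℝ (q + 1) g X γ (rmv i.castSucc m)) := by
      intro i
      rw [hsucc_right hX hγ, snoc_rmv]
      rfl
    rw [Fin.sum_univ_castSucc (n := q + 1)]
    simp only [hterm]
    congr 1
    rw [rmv_last]

theorem key_M (hX : IsOpen X) (hγ : γ ∈ X) {lam g : E → ℂ}
    (hlam : ContDiffOn ℝ (⊤ : ℕ∞) lam X) (hg : ContDiffOn ℝ (⊤ : ℕ∞) g X)
    (h0 : lam γ = 0) (hd : fderivWithin ℝ lam X γ ≠ 0)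
    (hflat : ∀ k : ℕ, iteratedFDerivWithin ℝ k (fun x => lam x * g x) X γ = 0) :
    ∀ k : ℕ, iteratedFDerivWithin ℝ k g X γ = 0 := by
  obtain ⟨u, hu⟩ : ∃ u, fderivWithin ℝ lam X γ u ≠ 0 := by
    by_contra h
    push_neg at h
    exact hd (ContinuousLinearMap.ext fun u => by simp [h u])
  intro k
  induction k using Nat.strong_induction_on with
  | _ k IH =>
    have hmul : (fun x => lam x * g x)
        = fun x => (ContinuousLinearMap.mul ℝ ℂ) (lam x) (g x) := by
      funext x; simp
    have hrel : ∀ m : Fin (k + 1) → E,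
        ∑ i : Fin (k + 1), fderivWithin ℝ lam X γ (m i)
          * iteratedFDerivWithin ℝ k g X γ (rmv i m) = 0 := by
      intro m
      have hlt := leading_term hX hγ k (ContinuousLinearMap.mul ℝ ℂ) lam g hlam hg h0
        (fun j hj => IH j hj) m
      rw [← hmul, hflat (k+1)] at hlt
      simp only [ContinuousMultilinearMap.zero_apply] at hlt
      simpa using hlt.symm
    have H : ∀ v : Fin k → E,
        ((1 : ℕ) : ℂ) * (fderivWithin ℝ lam X γ u * iteratedFDerivWithin ℝ k g X γ v)
          + ∑ j : Fin k, fderivWithin ℝ lam X γ (v j)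
              * iteratedFDerivWithin ℝ k g X γ (frontInsert u j v) = 0 := by
      intro v
      have h1 := hrel (Fin.cons u v)
      rw [Fin.sum_univ_succ] at h1
      simp only [Fin.cons_zero, Fin.cons_succ, rmv_zero, Fin.tail_cons, rmv_succ_cons] at h1
      simpa using h1
    exact polyAux k 1 Nat.one_pos (iteratedFDerivWithin ℝ k g X γ) (fderivWithin ℝ lam X γ) u hu H

end

/-- If `λ(γ) = 0`, `dλ(γ) ≠ 0` and `λ^m · e` vanishes of infinite order
at `γ` for some `m ≥ 1`, then `e` vanishes of infinite order at `γ`. -/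
theorem stmt_9 {n : ℕ} (X : Set (Fin n → ℝ)) (hX : IsOpen X)
    (lam e : (Fin n → ℝ) → ℂ)
    (hlam : ContDiffOn ℝ (⊤ : ℕ∞) lam X) (he : ContDiffOn ℝ (⊤ : ℕ∞) e X)
    (γ : Fin n → ℝ) (hγ : γ ∈ X)
    (h0 : lam γ = 0) (hd : fderivWithin ℝ lam X γ ≠ 0)
    (m : ℕ) (hm : 1 ≤ m)
    (hflat : ∀ k : ℕ, iteratedFDerivWithin ℝ k (fun x => lam x ^ m * e x) X γ = 0) :
    ∀ k : ℕ, iteratedFDerivWithin ℝ k e X γ = 0 := by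
  clear hm
  induction m generalizing e with
  | zero =>
    have h1 : (fun x => lam x ^ 0 * e x) = e := by funext x; simp
    rwa [h1] at hflat
  | succ m IH =>
    have hgs : ContDiffOn ℝ (⊤ : ℕ∞) (fun x => lam x ^ m * e x) X := (hlam.pow m).mul he
    have h1 : (fun x => lam x ^ (m + 1) * e x)
        = (fun x => lam x * (lam x ^ m * e x)) := by funext x; ring
    rw [h1] at hflat
    exact IH e he (key_M hX hγ hlam hgs h0 hd hflat)
end

section
/- Let p : ℝⁿ \ {0} → ℂ (or Mat(N,ℂ)) be smooth and homogeneous of degree m, and suppose p vanishes at a point ξ₀ ≠ 0 together with all derivatives tangent to the sphere S^{n−1}_{|ξ₀|} = {|ξ| = |ξ₀|} at ξ₀ (i.e. p ∘ ι vanishes of infinite order at ξ₀, where ι is the inclusion of the sphere). Then p vanishes of infinite order at ξ₀ as a function on ℝⁿ \ {0}: all partial derivatives ∂^β p(ξ₀) vanish. -/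
open Set

/-- If a smooth homogeneous function `p` of degree `m` on `ℝⁿ \ {0}`
vanishes at `ξ₀ ≠ 0` to infinite order along the sphere through `ξ₀` (expressed via the
radial retraction `ξ ↦ (‖ξ₀‖/‖ξ‖) • ξ` onto that sphere), then `p` vanishes of infinite
order at `ξ₀` as a function on `ℝⁿ \ {0}`. -/
theorem stmt_12 {n : ℕ} (m : ℝ)
    (p : EuclideanSpace ℝ (Fin n) → ℂ)
    (hp : ContDiffOn ℝ (⊤ : ℕ∞) p {ξ : EuclideanSpace ℝ (Fin n) | ξ ≠ 0})
    (hhom : ∀ ξ : EuclideanSpace ℝ (Fin n), ξ ≠ 0 → ∀ t > (0 : ℝ),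
      p (t • ξ) = ((t ^ m : ℝ) : ℂ) * p ξ)
    (ξ₀ : EuclideanSpace ℝ (Fin n)) (hξ₀ : ξ₀ ≠ 0)
    (hp0 : p ξ₀ = 0)
    (hflat : ∀ k : ℕ, iteratedFDerivWithin ℝ k
        (fun ξ => p ((‖ξ₀‖ / ‖ξ‖) • ξ)) {ξ : EuclideanSpace ℝ (Fin n) | ξ ≠ 0} ξ₀ = 0) :
    ∀ k : ℕ, iteratedFDerivWithin ℝ k p {ξ : EuclideanSpace ℝ (Fin n) | ξ ≠ 0} ξ₀ = 0 := by
  set s : Set (EuclideanSpace ℝ (Fin n)) := {ξ | ξ ≠ 0} with hs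
  have hsopen : IsOpen s := isOpen_compl_singleton
  have hsu : UniqueDiffOn ℝ s := hsopen.uniqueDiffOn
  have hξ₀s : ξ₀ ∈ s := hξ₀
  set g : EuclideanSpace ℝ (Fin n) → ℂ := fun ξ => (((‖ξ‖ / ‖ξ₀‖) ^ m : ℝ) : ℂ) with hg
  set q : EuclideanSpace ℝ (Fin n) → ℂ := fun ξ => p ((‖ξ₀‖ / ‖ξ‖) • ξ) with hq
  -- p = g * q on s
  have hfact : EqOn (fun ξ => g ξ * q ξ) p s := by
    intro ξ hξ
    have hξn : (0:ℝ) < ‖ξ‖ := norm_pos_iff.2 hξ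
    have hξ₀n : (0:ℝ) < ‖ξ₀‖ := norm_pos_iff.2 hξ₀
    have hξ' : ξ ≠ 0 := hξ
    have hr : (‖ξ₀‖ / ‖ξ‖) • ξ ≠ 0 := by
      simp [smul_eq_zero, hξ', div_eq_zero_iff, hξn.ne', hξ₀n.ne']
    have := hhom ((‖ξ₀‖ / ‖ξ‖) • ξ) hr (‖ξ‖ / ‖ξ₀‖) (div_pos hξn hξ₀n)
    have ht : (‖ξ‖ / ‖ξ₀‖) * (‖ξ₀‖ / ‖ξ‖) = 1 := by field_simp
    rw [smul_smul, ht, one_smul] at this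
    simp only [g, q]
    rw [← this]
  -- g is smooth on s
  have hgc : ContDiffOn ℝ (⊤ : ℕ∞) g s := by
    intro ξ hξ
    have hξn : (0:ℝ) < ‖ξ‖ := norm_pos_iff.2 hξ
    have h1 : ContDiffAt ℝ (⊤ : ℕ∞) (fun ξ : EuclideanSpace ℝ (Fin n) => ‖ξ‖ / ‖ξ₀‖) ξ :=
      (contDiffAt_norm ℝ hξ).div_const _
    have h2 : ContDiffAt ℝ (⊤ : ℕ∞) (fun ξ : EuclideanSpace ℝ (Fin n) => (‖ξ‖ / ‖ξ₀‖) ^ m) ξ := by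
      have := Real.contDiffAt_rpow_const_of_ne (n := ((⊤ : ℕ∞) : WithTop ℕ∞)) (x := ‖ξ‖ / ‖ξ₀‖) (p := m)
        (div_pos hξn (norm_pos_iff.2 hξ₀)).ne'
      exact this.comp ξ h1
    exact (Complex.ofRealCLM.contDiff.contDiffAt.comp ξ h2).contDiffWithinAt
  -- q is smooth on s
  have hqc : ContDiffOn ℝ (⊤ : ℕ∞) q s := by
    have hr : ContDiffOn ℝ (⊤ : ℕ∞) (fun ξ : EuclideanSpace ℝ (Fin n) => (‖ξ₀‖ / ‖ξ‖) • ξ) s := by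
      intro ξ hξ
      have hξn : (0:ℝ) < ‖ξ‖ := norm_pos_iff.2 hξ
      exact (((contDiffAt_const (c := ‖ξ₀‖)).div (contDiffAt_norm ℝ hξ) hξn.ne').smul
        contDiffAt_id).contDiffWithinAt
    have hmaps : MapsTo (fun ξ : EuclideanSpace ℝ (Fin n) => (‖ξ₀‖ / ‖ξ‖) • ξ) s s := by
      intro ξ hξ
      have hξn : (0:ℝ) < ‖ξ‖ := norm_pos_iff.2 hξ
      have hξ₀n : (0:ℝ) < ‖ξ₀‖ := norm_pos_iff.2 hξ₀
      have hξ' : ξ ≠ 0 := hξ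
      simp [s, smul_eq_zero, hξ', div_eq_zero_iff, hξn.ne', hξ₀n.ne']
    exact hp.comp hr hmaps
  intro k
  rw [← iteratedFDerivWithin_congr hfact hξ₀s k]
  have hbound := norm_iteratedFDerivWithin_mul_le (𝕜 := ℝ) hgc hqc hsu hξ₀s (n := k) (by exact_mod_cast le_top)
  have hzero : ∑ i ∈ Finset.range (k + 1), (k.choose i : ℝ) *
      ‖iteratedFDerivWithin ℝ i g s ξ₀‖ * ‖iteratedFDerivWithin ℝ (k - i) q s ξ₀‖ = 0 := by
    refine Finset.sum_eq_zero fun i _ => ?_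
    rw [hflat (k - i)]
    simp
  rw [hzero] at hbound
  exact norm_le_zero_iff.1 hbound
end
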